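/- Conditional prefix-free complexity K(y|x) cannot be characterized as the minimal prefix-free complexity of a program mapping x to y: it is NOT the case that K(y|x) = min{ K(p) : U(p,x) = y } + O(1), where U is the optimal universal machine. In fact, for every constant c there exist strings x, y with min{ K(p) : U(p,x) = y } > K(y|x) + c. -/

import Mathlib

/-- Binary strings. -/
abbrev BinStr := List Bool

/-- Standard encoding of a binary string as a natural number. -/
def enc (a : BinStr) : ℕ := Encodable.encode a

/-- A (conditional) machine: it takes a program (a binary string) and a condition
(a natural number, which encodes the conditioning data: a number, a string via `enc`,
or a tuple combined with the standard pairing `Nat.pair`) and possibly outputs a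
natural number (encoding the result in the same way). -/
abbrev Machine := BinStr → ℕ →. ℕ

/-- Conditional Kolmogorov complexity of `x` given condition `y`, with respect to the
machine `U`: the minimal length of a program `p` such that `U p y = x`. -/
noncomputable def cplx (U : Machine) (x y : ℕ) : ℕ :=
  sInf {n | ∃ p : BinStr, p.length = n ∧ x ∈ U p y}

/-- Unconditional Kolmogorov complexity: conditional complexity with the trivial
condition `0`. -/
noncomputable def cplx0 (U : Machine) (x : ℕ) : ℕ := cplx U x 0

/-- `U` is an optimal universal machine for plain complexity: it is partial computable
and simulates every partial computable machine with at most a constant overhead in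
program length. -/
def IsOptimal (U : Machine) : Prop :=
  Partrec₂ U ∧
    ∀ V : Machine, Partrec₂ V →
      ∃ c : ℕ, ∀ (p : BinStr) (y x : ℕ), x ∈ V p y →
        ∃ q : BinStr, q.length ≤ p.length + c ∧ x ∈ U q y

/-- A machine is prefix-free if, for every condition, the set of its halting programs
is prefix-free: no halting program is a proper prefix of another halting program. -/
def PrefixFreeMachine (M : Machine) : Prop :=
  ∀ (y : ℕ) (p q : BinStr), p <+: q → (M p y).Dom → (M q y).Dom → p = q

/-- `U` is an optimal universal prefix-free machine: it is partial computable,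
prefix-free, and simulates every partial computable prefix-free machine with at most
a constant overhead in program length. -/
def IsPrefixOptimal (U : Machine) : Prop :=
  Partrec₂ U ∧ PrefixFreeMachine U ∧
    ∀ V : Machine, Partrec₂ V → PrefixFreeMachine V →
      ∃ c : ℕ, ∀ (p : BinStr) (y x : ℕ), x ∈ V p y →
        ∃ q : BinStr, q.length ≤ p.length + c ∧ x ∈ U q y

/-!
Suppose `min {K(p) : U(p,x) = y} ≤ K(y|x) + c` for all `x`, `y`. Take `x = 0ⁿ` and the at least
`2ⁿ⁻¹` strings `y` of length `n` with `K(y|0ⁿ) ≥ n`, and let `p_y` be the minimising programs; they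
are pairwise distinct since `U(p_y, 0ⁿ) = y`. Their complexities lie in a window of constant width
around `n`: `K(p_y) ≤ K(y|0ⁿ) + c ≤ n + O(1)`, and `K(p_y) ≥ K(y|0ⁿ) - O(1) ≥ n - O(1)` because a
prefix-free machine can first decode `p` from its shortest description and then run `U(p, x)`.
So length `n` contributes at least `2^-(c + O(1))` to the Kraft sum `∑ₚ 2^-K(p) ≤ 1`; the
windows of sufficiently spread out lengths `n` are disjoint, and their contributions add up to
more than `1`.
-/

namespace InformationTheory

variable {α : Type*}

def IsPrefixFree (S : Set (List α)) : Prop :=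
  ∀ p ∈ S, ∀ q ∈ S, p <+: q → p = q

theorem IsPrefixFree.uniquelyDecodable {S : Set (List α)} (hS : IsPrefixFree S)
    (hnil : [] ∉ S) : UniquelyDecodable S := by
  intro L₁
  induction L₁ with
  | nil =>
    rintro L₂ - h₂ hflat
    have : ∀ w ∈ L₂, w = [] := List.flatten_eq_nil_iff.mp hflat.symm
    cases L₂ with
    | nil => rfl
    | cons v _ => exact absurd (this v (by simp) ▸ h₂ v (by simp)) hnil
  | cons w L₁ ih =>
    rintro (_ | ⟨v, L₂⟩) h₁ h₂ hflat
    · have : w = [] := List.flatten_eq_nil_iff.mp hflat w (by simp)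
      exact absurd (this ▸ h₁ w (by simp)) hnil
    · simp only [List.flatten_cons] at hflat
      have hw := h₁ w (by simp)
      have hv := h₂ v (by simp)
      have hwv : w = v := by
        rcases List.prefix_or_prefix_of_prefix (List.prefix_append w _)
            (hflat ▸ List.prefix_append v _) with h | h
        · exact hS w hw v hv h
        · exact (hS v hv w hw h).symm
      subst hwv
      rw [ih L₂ (fun u hu => h₁ u (by simp [hu])) (fun u hu => h₂ u (by simp [hu]))
        (List.append_cancel_left hflat)]

theorem IsPrefixFree.sum_pow_length_le_one [Fintype α] [Nonempty α] {S : Finset (List α)}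
    (hS : IsPrefixFree (S : Set (List α))) :
    ∑ w ∈ S, (1 / Fintype.card α : ℝ) ^ w.length ≤ 1 := by
  by_cases hnil : [] ∈ S
  · have : S = {[]} := Finset.eq_singleton_iff_unique_mem.mpr
      ⟨hnil, fun q hq => (hS [] hnil q hq List.nil_prefix).symm⟩
    simp [this]
  · exact kraft_mcmillan_inequality (hS.uniquelyDecodable (by simpa using hnil))

end InformationTheory

open InformationTheory

def dec (n : ℕ) : BinStr := (Encodable.decode n).getD []

theorem dec_enc (s : BinStr) : dec (enc s) = s := by
  simp [dec, enc, Encodable.encodek]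

theorem primrec_dec : Primrec dec :=
  Primrec.option_getD.comp Primrec.decode (Primrec.const [])

theorem enc_injective : Function.Injective enc := Encodable.encode_injective

def unary (m : ℕ) : BinStr := List.replicate m true ++ [false]

theorem eq_of_unary_prefix_unary {a b : ℕ} (h : unary a <+: unary b) : a = b := by
  induction a generalizing b with
  | zero => cases b <;> simp_all [unary, List.replicate_succ]
  | succ a ih =>
    cases b with
    | zero => simp [unary, List.replicate_succ] at h
    | succ b => exact congrArg _ (ih (by simpa [unary, List.replicate_succ] using h))

theorem primrec_unary : Primrec unary := by
  have : Primrec fun m : ℕ => (List.range m).map fun _ => true :=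
    Primrec.list_map Primrec.list_range (Primrec.const true).to₂
  exact (Primrec.list_append.comp this (Primrec.const [false])).of_eq fun m => by
    simp [unary, List.map_const']

theorem dom_ofOption_ite {c : Prop} [Decidable c] {v : ℕ} :
    ((if c then some v else none : Option ℕ) : Part ℕ).Dom ↔ c := by
  split_ifs <;> simp [*]

def unaryMachine : Machine := fun q _ =>
  ((if q = unary (q.length - 1) then some (q.length - 1) else none : Option ℕ) : Part ℕ)

def copyMachine : Machine := fun q c =>
  ((if q.length = (dec c).length then some (enc q) else none : Option ℕ) : Part ℕ)

def runOutput (V U : Machine) : Machine := fun r x => (V r 0).bind fun e => U (dec e) x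

theorem mem_unaryMachine (m x : ℕ) : m ∈ unaryMachine (unary m) x := by
  simp [unaryMachine, unary]

theorem unaryMachine_partrec : Partrec₂ unaryMachine := by
  refine Computable.ofOption (Primrec.ite ?_ ?_ (Primrec.const none)).to_comp
  · exact Primrec.eq.comp Primrec.fst
      (primrec_unary.comp (Primrec.pred.comp (Primrec.list_length.comp Primrec.fst)))
  · exact Primrec.option_some.comp (Primrec.pred.comp (Primrec.list_length.comp Primrec.fst))

theorem copyMachine_partrec : Partrec₂ copyMachine := by
  refine Computable.ofOption (Primrec.ite ?_ ?_ (Primrec.const none)).to_comp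
  · exact Primrec.eq.comp (Primrec.list_length.comp Primrec.fst)
      (Primrec.list_length.comp (primrec_dec.comp Primrec.snd))
  · exact Primrec.option_some.comp (Primrec.encode.comp Primrec.fst)

theorem runOutput_partrec {V U : Machine} (hV : Partrec₂ V) (hU : Partrec₂ U) :
    Partrec₂ (runOutput V U) :=
  (hV.comp Computable.fst (Computable.const 0)).bind
    (hU.comp (primrec_dec.to_comp.comp Computable.snd) (Computable.snd.comp Computable.fst))

theorem unaryMachine_prefixFree : PrefixFreeMachine unaryMachine := by
  intro _ p q hpq hp hq
  rw [unaryMachine, dom_ofOption_ite] at hp hq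
  rw [hp, hq] at hpq ⊢
  rw [eq_of_unary_prefix_unary hpq]

theorem copyMachine_prefixFree : PrefixFreeMachine copyMachine := by
  intro _ p q hpq hp hq
  rw [copyMachine, dom_ofOption_ite] at hp hq
  exact hpq.eq_of_length (hp.trans hq.symm)

theorem runOutput_prefixFree {V : Machine} (hV : PrefixFreeMachine V) (U : Machine) :
    PrefixFreeMachine (runOutput V U) :=
  fun _ p q hpq hp hq => hV 0 p q hpq hp.1 hq.1

section Complexity

variable {V : Machine}

theorem cplx_le_length {q : BinStr} {m x : ℕ} (h : m ∈ V q x) : cplx V m x ≤ q.length :=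
  Nat.sInf_le ⟨q, rfl, h⟩

theorem exists_length_eq_cplx {m x : ℕ} (h : ∃ p, m ∈ V p x) :
    ∃ q : BinStr, q.length = cplx V m x ∧ m ∈ V q x := by
  obtain ⟨p, hp⟩ := h
  exact Nat.sInf_mem (s := {n | ∃ q : BinStr, q.length = n ∧ m ∈ V q x}) ⟨p.length, p, rfl, hp⟩

theorem IsOptimal.exists_mem {U : Machine} (hU : IsOptimal U) (m x : ℕ) : ∃ p, m ∈ U p x := by
  obtain ⟨c, hc⟩ := hU.2 unaryMachine unaryMachine_partrec
  obtain ⟨q, -, hq⟩ := hc (unary m) x m (mem_unaryMachine m x)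
  exact ⟨q, hq⟩

namespace IsPrefixOptimal

theorem exists_mem (hV : IsPrefixOptimal V) (m x : ℕ) : ∃ p, m ∈ V p x := by
  obtain ⟨c, hc⟩ := hV.2.2 unaryMachine unaryMachine_partrec unaryMachine_prefixFree
  obtain ⟨q, -, hq⟩ := hc (unary m) x m (mem_unaryMachine m x)
  exact ⟨q, hq⟩

theorem sum_half_pow_cplx_le_one (hV : IsPrefixOptimal V) (x : ℕ) (T : Finset ℕ) :
    ∑ m ∈ T, (1 / 2 : ℝ) ^ cplx V m x ≤ 1 := by
  choose q hqlen hqmem using fun m => exists_length_eq_cplx (hV.exists_mem m x)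
  have hinj : Set.InjOn q T := fun m _ m' _ h => Part.mem_unique (hqmem m) (h ▸ hqmem m')
  have hpf : IsPrefixFree ((T.image q : Finset BinStr) : Set BinStr) := by
    simp only [Finset.coe_image]
    rintro _ ⟨m, -, rfl⟩ _ ⟨m', -, rfl⟩ h
    exact hV.2.1 x _ _ h (hqmem m).fst (hqmem m').fst
  calc ∑ m ∈ T, (1 / 2 : ℝ) ^ cplx V m x = ∑ s ∈ T.image q, (1 / 2 : ℝ) ^ s.length := by
        rw [Finset.sum_image hinj]; simp only [hqlen]
    _ ≤ 1 := by simpa using hpf.sum_pow_length_le_one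

theorem exists_cplx_le_length_add (hV : IsPrefixOptimal V) :
    ∃ c, ∀ y x : BinStr, y.length = x.length → cplx V (enc y) (enc x) ≤ y.length + c := by
  obtain ⟨c, hc⟩ := hV.2.2 copyMachine copyMachine_partrec copyMachine_prefixFree
  refine ⟨c, fun y x hyx => ?_⟩
  obtain ⟨q, hqlen, hq⟩ := hc y (enc x) (enc y) (by simp [copyMachine, dec_enc, hyx])
  exact (cplx_le_length hq).trans hqlen

theorem exists_cplx_le_cplx0_add (hV : IsPrefixOptimal V) {U : Machine} (hU : Partrec₂ U) :
    ∃ c, ∀ (p : BinStr) (x m : ℕ), m ∈ U p x → cplx V m x ≤ cplx0 V (enc p) + c := by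
  obtain ⟨c, hc⟩ := hV.2.2 _ (runOutput_partrec hV.1 hU) (runOutput_prefixFree hV.2.1 U)
  refine ⟨c, fun p x m hm => ?_⟩
  obtain ⟨r, hrlen, hr⟩ := exists_length_eq_cplx (hV.exists_mem (enc p) 0)
  obtain ⟨q, hqlen, hq⟩ := hc r x m (Part.mem_bind_iff.mpr ⟨_, hr, by rwa [dec_enc]⟩)
  calc cplx V m x ≤ q.length := cplx_le_length hq
    _ ≤ cplx0 V (enc p) + c := by rwa [cplx0, ← hrlen]

end IsPrefixOptimal

end Complexity

def strings (n : ℕ) : Finset BinStr :=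
  (Finset.univ : Finset (List.Vector Bool n)).map ⟨List.Vector.toList, List.Vector.toList_injective⟩

theorem card_strings (n : ℕ) : (strings n).card = 2 ^ n := by
  simp [strings]

theorem length_of_mem_strings {n : ℕ} {s : BinStr} (h : s ∈ strings n) : s.length = n := by
  obtain ⟨v, -, rfl⟩ := Finset.mem_map.mp h
  exact v.toList_length

theorem IsPrefixOptimal.two_pow_le_two_mul_card_incompressible {V : Machine}
    (hV : IsPrefixOptimal V) (x n : ℕ) :
    2 ^ n ≤ 2 * ((strings n).filter fun y => n ≤ cplx V (enc y) x).card := by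
  have hsplit := Finset.card_filter_add_card_filter_not (s := strings n)
    (p := fun y => n ≤ cplx V (enc y) x)
  rw [card_strings] at hsplit
  set B := (strings n).filter fun y => ¬n ≤ cplx V (enc y) x
  have hterm : ∀ y ∈ B, 2 * (1 / 2 : ℝ) ^ n ≤ (1 / 2 : ℝ) ^ cplx V (enc y) x := by
    intro y hy
    have hlt : cplx V (enc y) x + 1 ≤ n := Nat.lt_of_not_le (Finset.mem_filter.mp hy).2
    calc 2 * (1 / 2 : ℝ) ^ n ≤ 2 * (1 / 2 : ℝ) ^ (cplx V (enc y) x + 1) := by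
          gcongr _ * ?_; exact pow_le_pow_of_le_one (by norm_num) (by norm_num) hlt
      _ = (1 / 2 : ℝ) ^ cplx V (enc y) x := by ring
  have hB : (B.card : ℝ) * (2 * (1 / 2 : ℝ) ^ n) ≤ 1 := by
    calc (B.card : ℝ) * (2 * (1 / 2 : ℝ) ^ n) ≤ ∑ y ∈ B, (1 / 2 : ℝ) ^ cplx V (enc y) x := by
          rw [← nsmul_eq_mul]; exact Finset.card_nsmul_le_sum _ _ _ hterm
      _ = ∑ m ∈ B.image enc, (1 / 2 : ℝ) ^ cplx V m x := by
          rw [Finset.sum_image enc_injective.injOn]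
      _ ≤ 1 := hV.sum_half_pow_cplx_le_one x _
  have hB' : 2 * B.card ≤ 2 ^ n := by
    rw [one_div_pow, mul_one_div, mul_div_assoc', div_le_one (by positivity)] at hB
    exact_mod_cast (by linarith : (2 * B.card : ℝ) ≤ 2 ^ n)
  omega

theorem half_pow_le_sum_half_pow_of_card {α : Type*} (w : α → ℕ) {P : Finset α} {n b : ℕ}
    (hcard : 2 ^ n ≤ 2 * P.card) (hw : ∀ t ∈ P, w t ≤ n + b) :
    (1 / 2 : ℝ) ^ (b + 1) ≤ ∑ t ∈ P, (1 / 2 : ℝ) ^ w t := by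
  have hcard' : (2 : ℝ) ^ n / 2 ≤ P.card := by
    rw [div_le_iff₀ (by norm_num)]; exact_mod_cast (by linarith : 2 ^ n ≤ P.card * 2)
  calc (1 / 2 : ℝ) ^ (b + 1) = 2 ^ n / 2 * (1 / 2) ^ (n + b) := by
        rw [one_div, inv_pow, inv_pow, pow_add, pow_succ]; field_simp; ring
    _ ≤ P.card * (1 / 2 : ℝ) ^ (n + b) := by gcongr
    _ ≤ ∑ t ∈ P, (1 / 2 : ℝ) ^ w t := by
        rw [← nsmul_eq_mul]
        exact Finset.card_nsmul_le_sum _ _ _ fun t ht =>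
          pow_le_pow_of_le_one (by norm_num) (by norm_num) (hw t ht)

theorem exists_one_lt_sum_half_pow {α : Type*} [DecidableEq α] (w : α → ℕ) (a b : ℕ)
    (P : ℕ → Finset α) (hcard : ∀ n, 2 ^ n ≤ 2 * (P n).card)
    (hw : ∀ n, ∀ t ∈ P n, n ≤ w t + a ∧ w t ≤ n + b) :
    ∃ T : Finset α, 1 < ∑ t ∈ T, (1 / 2 : ℝ) ^ w t := by
  -- Blocks `n = j * D` with `D > a + b` have disjoint weight windows, and each adds `2^-(b+1)`.
  set D := a + b + 1
  set J := 2 ^ (b + 1) + 1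
  have hdisj : (Finset.range J : Set ℕ).PairwiseDisjoint fun j => P (j * D) := by
    intro i _ j _ hij
    refine Finset.disjoint_left.mpr fun t hi hj => hij ?_
    have hi' := hw _ t hi
    have hj' := hw _ t hj
    have hi_lt : i < j + 1 := Nat.lt_of_mul_lt_mul_right (by rw [add_one_mul]; omega : i * D < _)
    have hj_lt : j < i + 1 := Nat.lt_of_mul_lt_mul_right (by rw [add_one_mul]; omega : j * D < _)
    omega
  refine ⟨(Finset.range J).biUnion fun j => P (j * D), ?_⟩
  rw [Finset.sum_biUnion hdisj]
  calc 1 < ∑ _j ∈ Finset.range J, (1 / 2 : ℝ) ^ (b + 1) := by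
        simp only [Finset.sum_const, Finset.card_range, nsmul_eq_mul, J]
        push_cast
        rw [add_mul, ← mul_pow]
        norm_num
    _ ≤ _ := Finset.sum_le_sum fun j _ =>
        half_pow_le_sum_half_pow_of_card w (hcard _) fun t ht => (hw _ t ht).2

noncomputable def minProgramCplx (U V : Machine) (y x : ℕ) : ℕ :=
  sInf {m | ∃ p : BinStr, y ∈ U p x ∧ cplx0 V (enc p) = m}

theorem IsOptimal.exists_cplx0_eq_minProgramCplx {U : Machine} (hU : IsOptimal U) (V : Machine)
    (y x : ℕ) : ∃ p : BinStr, y ∈ U p x ∧ cplx0 V (enc p) = minProgramCplx U V y x := by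
  obtain ⟨p, hp⟩ := hU.exists_mem y x
  exact Nat.sInf_mem (s := {m | ∃ p : BinStr, y ∈ U p x ∧ cplx0 V (enc p) = m}) ⟨_, p, hp, rfl⟩

theorem IsPrefixOptimal.exists_many_programs_of_minProgramCplx_le {U V : Machine}
    (hV : IsPrefixOptimal V) (hU : IsOptimal U) {c : ℕ}
    (hc : ∀ x y : BinStr, minProgramCplx U V (enc y) (enc x) ≤ cplx V (enc y) (enc x) + c) :
    ∃ a b : ℕ, ∀ n, ∃ P : Finset ℕ,
      2 ^ n ≤ 2 * P.card ∧ ∀ m ∈ P, n ≤ cplx0 V m + a ∧ cplx0 V m ≤ n + b := by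
  obtain ⟨a, hlower⟩ := hV.exists_cplx_le_cplx0_add hU.1
  obtain ⟨c₀, hupper⟩ := hV.exists_cplx_le_length_add
  refine ⟨a, c₀ + c, fun n => ?_⟩
  set x := List.replicate n false
  choose p hpU hpK using fun y : BinStr => hU.exists_cplx0_eq_minProgramCplx V (enc y) (enc x)
  set G := (strings n).filter fun y => n ≤ cplx V (enc y) (enc x)
  have hinj : Set.InjOn (fun y => enc (p y)) G := fun y _ y' _ h =>
    enc_injective (Part.mem_unique (hpU y) (enc_injective h ▸ hpU y'))
  refine ⟨G.image fun y => enc (p y), ?_, ?_⟩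
  · rw [Finset.card_image_of_injOn hinj]
    exact hV.two_pow_le_two_mul_card_incompressible _ n
  · simp only [Finset.mem_image]
    rintro _ ⟨y, hy, rfl⟩
    obtain ⟨hy, hny⟩ := Finset.mem_filter.mp hy
    have hlen := length_of_mem_strings hy
    have h₁ := hlower _ _ _ (hpU y)
    have h₂ := hpK y ▸ hc x y
    have h₃ := hupper y x (by simp [x, hlen])
    omega

/-- `K(y|x)` cannot be characterized as the minimal prefix-free
complexity of a program mapping `x` to `y`: for every constant `c` there are strings
`x`, `y` with `min { K(p) : U(p,x) = y } > K(y|x) + c`. -/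
theorem conditional_prefix_not_min_program (U V : Machine)
    (hU : IsOptimal U) (hV : IsPrefixOptimal V) :
    ∀ c : ℕ, ∃ x y : BinStr,
      cplx V (enc y) (enc x) + c <
        sInf {m : ℕ | ∃ p : BinStr, enc y ∈ U p (enc x) ∧ cplx0 V (enc p) = m} := by
  intro c
  by_contra! hc
  obtain ⟨a, b, hmany⟩ := hV.exists_many_programs_of_minProgramCplx_le hU hc
  choose P hcard hwin using hmany
  obtain ⟨T, hT⟩ := exists_one_lt_sum_half_pow (cplx0 V) a b P hcard hwin
  exact hT.not_ge (hV.sum_half_pow_cplx_le_one 0 T)
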